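/- Let s ≥ 1, n ≥ 4s−1, γ ∈ ℝ. Let g⁺ ∈ ℂ^s have all entries nonzero, let θ⁺ ∈ 𝕋^s have pairwise distinct entries with (θ⁺_k)^n ≠ e^{−iγ} for all k, and let z_0,…,z_{4s−2} ∈ 𝕋 be pairwise distinct with z_j^n = e^{iγ} for all j. (Then L̂⁺(z_j) ≠ 0 for all j, so y_j = |u⁺(z_j)/v⁺(z_j)|² is well defined.) Suppose L̂ and M are Hermitian Laurent polynomials with coefficients supported in degrees −s,…,s and −(s−1),…,s−1 respectively, satisfying y_j·L̂(z_j) − M(z_j) = 0 for all 0 ≤ j ≤ 4s−2. Then there exists a real scalar c such that L̂ = c·L̂⁺ and M = c·M⁺ identically, where M⁺ = L⁺ + e^{iγ}·L̃⁺ + e^{−iγ}·(L̃⁺)*. -/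

import Mathlib

/-!
Write `q = e^{iγ}` and `U = q·û + ũ`. On `𝕋` one has `M⁺ = |U|²`, and `U(z_j) = u(z_j)` because
`z_jⁿ = q`; so the sample equations read `|U|²·L̂ = |v|²·M` at the `z_j`. Multiplied by
`z^{2s-1}` this is a polynomial identity of degree `≤ 4s − 2` holding at `4s − 1` points, hence
everywhere: `(z^{s-1}|U|²)·(z^s L̂) = (z^s|v|²)·(z^{s-1} M)` as polynomials. On `𝕋`, `z^s|v|²` is
a constant multiple of `v²`, whose roots `θ_l⁻¹` are not roots of `U`, since
`U(θ_l⁻¹) = g_l (qθ_lⁿ − 1) t_l(θ_l⁻¹)`. Coprimality and a degree count give `L̂ = c·L̂⁺` and then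
`M = c·M⁺`; `c` is real because `L̂` and `L̂⁺` are real and `L̂⁺ ≠ 0` at the samples.
-/

open Polynomial Finset Complex

/-- `t_l(z) = ∏_{i ≠ l} (z·θ_i − 1)`. -/
noncomputable def tPoly (s : ℕ) (θ : Fin s → ℂ) (l : Fin s) : Polynomial ℂ :=
  ∏ i ∈ Finset.univ.erase l, (Polynomial.C (θ i) * Polynomial.X - 1)

/-- `û(z) = Σ_l g_l · θ_l^n · t_l(z)`. -/
noncomputable def uHat (s n : ℕ) (θ g : Fin s → ℂ) : Polynomial ℂ :=
  ∑ l : Fin s, Polynomial.C (g l * θ l ^ n) * tPoly s θ l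

/-- `ũ(z) = −Σ_l g_l · t_l(z)`. -/
noncomputable def uTilde (s : ℕ) (θ g : Fin s → ℂ) : Polynomial ℂ :=
  -∑ l : Fin s, Polynomial.C (g l) * tPoly s θ l

/-- `v(z) = ∏_l (z·θ_l − 1)`. -/
noncomputable def vPoly (s : ℕ) (θ : Fin s → ℂ) : Polynomial ℂ :=
  ∏ l : Fin s, (Polynomial.C (θ l) * Polynomial.X - 1)

/-- `u(z) = z^n·û(z) + ũ(z)`. -/
noncomputable def uPoly (s n : ℕ) (θ g : Fin s → ℂ) : Polynomial ℂ :=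
  Polynomial.X ^ n * uHat s n θ g + uTilde s θ g

/-- Evaluation of a Laurent polynomial with coefficient function `c` supported in degrees
`−d, …, d` at the point `z`. -/
noncomputable def lEval (d : ℕ) (c : ℤ → ℂ) (z : ℂ) : ℂ :=
  ∑ k ∈ Finset.Icc (-(d : ℤ)) (d : ℤ), c k * z ^ k

open ComplexConjugate

lemma ne_zero_of_norm_eq_one {z : ℂ} (hz : ‖z‖ = 1) : z ≠ 0 :=
  norm_ne_zero_iff.mp (by rw [hz]; exact one_ne_zero)

lemma conj_eq_inv_of_norm_eq_one {z : ℂ} (hz : ‖z‖ = 1) : conj z = z⁻¹ :=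
  (Complex.inv_eq_conj hz).symm

lemma mul_conj_of_norm_eq_one {z : ℂ} (hz : ‖z‖ = 1) : z * conj z = 1 := by
  rw [conj_eq_inv_of_norm_eq_one hz, mul_inv_cancel₀ (ne_zero_of_norm_eq_one hz)]

noncomputable def conjReflect (d : ℕ) (P : ℂ[X]) : ℂ[X] :=
  (P.map (starRingEnd ℂ)).reflect d

lemma natDegree_conjReflect_le {d : ℕ} {P : ℂ[X]} (hP : P.natDegree ≤ d) :
    (conjReflect d P).natDegree ≤ d :=
  natDegree_reflect_le.trans (max_le le_rfl ((natDegree_map_le).trans hP))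

lemma eval_conjReflect {d : ℕ} {P : ℂ[X]} (hP : P.natDegree ≤ d) {z : ℂ} (hz : ‖z‖ = 1) :
    (conjReflect d P).eval z = z ^ d * conj (P.eval z) := by
  have hz0 := ne_zero_of_norm_eq_one hz
  let _ : Invertible z⁻¹ := invertibleOfNonzero (inv_ne_zero hz0)
  have key := eval₂_reflect_mul_pow (RingHom.id ℂ) z⁻¹ d (P.map (starRingEnd ℂ))
    ((natDegree_map_le).trans hP)
  rw [invOf_eq_inv, inv_inv, ← eval, ← eval, eval_map, inv_pow, ← conj_eq_inv_of_norm_eq_one hz,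
    eval₂_at_apply] at key
  rw [conjReflect, ← key]
  field_simp

noncomputable def laurentPoly (d : ℕ) (c : ℤ → ℂ) : ℂ[X] :=
  ∑ j ∈ range (2 * d + 1), C (c ((j : ℤ) - d)) * X ^ j

lemma natDegree_laurentPoly_le (d : ℕ) (c : ℤ → ℂ) : (laurentPoly d c).natDegree ≤ 2 * d :=
  natDegree_sum_le_of_forall_le _ _ fun _ hj =>
    (natDegree_C_mul_X_pow_le _ _).trans (Nat.lt_succ_iff.mp (mem_range.mp hj))

lemma eval_laurentPoly (d : ℕ) (c : ℤ → ℂ) {z : ℂ} (hz : z ≠ 0) :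
    (laurentPoly d c).eval z = z ^ d * lEval d c z := by
  simp only [laurentPoly, lEval, eval_finsetSum, eval_mul, eval_C, eval_pow, eval_X, mul_sum]
  refine sum_nbij' (fun j => (j : ℤ) - d) (fun k => (k + d).toNat) ?_ ?_ ?_ ?_ ?_ <;>
    intro j hj <;> simp only [mem_range, mem_Icc] at hj ⊢
  · omega
  · omega
  · omega
  · omega
  · rw [← zpow_natCast, ← zpow_natCast, mul_left_comm, ← zpow_add₀ hz, add_sub_cancel]

lemma lEval_eq_lEval_of_le {d e : ℕ} (hed : e ≤ d) {c : ℤ → ℂ}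
    (hc : ∀ k : ℤ, (k < -(e : ℤ) ∨ (e : ℤ) < k) → c k = 0) (z : ℂ) :
    lEval d c z = lEval e c z := by
  refine (sum_subset (Icc_subset_Icc (by omega) (by omega)) fun k hk hke => ?_).symm
  simp only [mem_Icc] at hk hke
  rw [hc k (by omega), zero_mul]

lemma conj_lEval {d : ℕ} {c : ℤ → ℂ} (hc : ∀ k, c (-k) = conj (c k)) {z : ℂ} (hz : ‖z‖ = 1) :
    conj (lEval d c z) = lEval d c z := by
  rw [lEval, map_sum]
  refine sum_nbij' (fun k => -k) (fun k => -k) ?_ ?_ (fun k _ => neg_neg k)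
    (fun k _ => neg_neg k) fun k _ => ?_
  · intro k hk; simp only [mem_Icc] at hk ⊢; omega
  · intro k hk; simp only [mem_Icc] at hk ⊢; omega
  · rw [map_mul, ← hc, map_zpow₀, conj_eq_inv_of_norm_eq_one hz, inv_zpow, ← zpow_neg]

noncomputable def normSqPoly (d : ℕ) (P : ℂ[X]) : ℂ[X] :=
  P * conjReflect d P

lemma natDegree_normSqPoly_le {d : ℕ} {P : ℂ[X]} (hP : P.natDegree ≤ d) :
    (normSqPoly d P).natDegree ≤ 2 * d :=
  natDegree_mul_le.trans (by linarith [natDegree_conjReflect_le hP])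

lemma eval_normSqPoly {d : ℕ} {P : ℂ[X]} (hP : P.natDegree ≤ d) {z : ℂ} (hz : ‖z‖ = 1) :
    (normSqPoly d P).eval z = z ^ d * (P.eval z * conj (P.eval z)) := by
  rw [normSqPoly, eval_mul, eval_conjReflect hP hz]
  ring

lemma eval_normSqPoly_ne_zero {d : ℕ} {P : ℂ[X]} (hP : P.natDegree ≤ d) {z : ℂ}
    (hz : ‖z‖ = 1) (hPz : P.eval z ≠ 0) : (normSqPoly d P).eval z ≠ 0 := by
  have hz0 := ne_zero_of_norm_eq_one hz
  rw [eval_normSqPoly hP hz]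
  exact mul_ne_zero (pow_ne_zero d hz0) (mul_ne_zero hPz ((_root_.map_ne_zero _).mpr hPz))

lemma lEval_eq_of_laurentPoly_eq {d : ℕ} {c : ℤ → ℂ} {Q : ℂ[X]} {f : ℂ → ℂ}
    (hQ : ∀ w : ℂ, ‖w‖ = 1 → Q.eval w = w ^ d * f w) {a : ℂ} (h : laurentPoly d c = C a * Q)
    {w : ℂ} (hw : ‖w‖ = 1) : lEval d c w = a * f w := by
  have hw0 := ne_zero_of_norm_eq_one hw
  have := congrArg (eval w) h
  rw [eval_laurentPoly d c hw0, eval_mul, eval_C, hQ w hw, mul_left_comm] at this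
  exact mul_left_cancel₀ (pow_ne_zero d hw0) this

lemma exists_eq_C_mul_of_mul_eq_mul {K : Type*} [Field K] {N L W M : K[X]} (hNW : IsCoprime N W)
    (hW : W ≠ 0) (hL : L.natDegree ≤ W.natDegree) (h : N * L = W * M) :
    ∃ c : K, L = C c * W ∧ M = C c * N := by
  obtain ⟨R, rfl⟩ : W ∣ L := hNW.symm.dvd_of_dvd_mul_left ⟨M, h⟩
  obtain ⟨c, rfl⟩ : ∃ c, R = C c := by
    rcases eq_or_ne R 0 with rfl | hR
    · exact ⟨0, C_0.symm⟩
    · rw [natDegree_mul hW hR] at hL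
      exact ⟨R.coeff 0, eq_C_of_natDegree_eq_zero (by omega)⟩
  refine ⟨c, mul_comm _ _, mul_left_cancel₀ hW ?_⟩
  rw [← h]
  ring

lemma exists_eq_C_mul_of_eval_eq {K : Type*} [Field K] {ι : Type*} [Fintype ι] {z : ι → K}
    (hz : Function.Injective z) {N L W M : K[X]} (hNW : IsCoprime N W) (hW : W ≠ 0)
    (hL : L.natDegree ≤ W.natDegree) (hNL : N.natDegree + L.natDegree < Fintype.card ι)
    (hWM : W.natDegree + M.natDegree < Fintype.card ι)
    (heval : ∀ j, N.eval (z j) * L.eval (z j) = W.eval (z j) * M.eval (z j)) :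
    ∃ c : K, L = C c * W ∧ M = C c * N := by
  refine exists_eq_C_mul_of_mul_eq_mul hNW hW hL (sub_eq_zero.mp ?_)
  refine eq_zero_of_natDegree_lt_card_of_eval_eq_zero _ hz (fun j => ?_) ?_
  · rw [eval_sub, eval_mul, eval_mul, heval, sub_self]
  · exact (natDegree_sub_le _ _).trans_lt
      (max_lt (natDegree_mul_le.trans_lt hNL) (natDegree_mul_le.trans_lt hWM))

section Numerator

variable {s : ℕ} {θ : Fin s → ℂ}

lemma natDegree_C_mul_X_sub_one_le (a : ℂ) : (C a * X - 1 : ℂ[X]).natDegree ≤ 1 :=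
  (natDegree_sub_le _ _).trans (max_le ((natDegree_C_mul_le a X).trans natDegree_X_le) (by simp))

lemma natDegree_tPoly_le (l : Fin s) : (tPoly s θ l).natDegree ≤ s - 1 := by
  refine (natDegree_prod_le _ _).trans
    ((sum_le_sum fun i _ => natDegree_C_mul_X_sub_one_le _).trans ?_)
  simp [card_erase_of_mem]

lemma eval_tPoly_inv_of_ne {k l : Fin s} (hk : θ k ≠ 0) (hlk : l ≠ k) :
    (tPoly s θ l).eval (θ k)⁻¹ = 0 := by
  rw [tPoly, eval_prod]
  exact prod_eq_zero (mem_erase.mpr ⟨hlk.symm, mem_univ k⟩) (by simp [hk])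

lemma eval_tPoly_inv_ne_zero (hθ : Function.Injective θ) {k : Fin s} (hk : θ k ≠ 0) :
    (tPoly s θ k).eval (θ k)⁻¹ ≠ 0 := by
  rw [tPoly, eval_prod]
  refine prod_ne_zero_iff.mpr fun i hi => ?_
  simp only [eval_sub, eval_mul, eval_C, eval_X, eval_one, sub_ne_zero]
  rw [← div_eq_mul_inv, Ne, div_eq_one_iff_eq hk]
  exact fun h => (mem_erase.mp hi).1 (hθ h)

lemma eval_sum_C_mul_tPoly_inv (a : Fin s → ℂ) {k : Fin s} (hk : θ k ≠ 0) :
    (∑ l, C (a l) * tPoly s θ l).eval (θ k)⁻¹ = a k * (tPoly s θ k).eval (θ k)⁻¹ := by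
  rw [eval_finsetSum, sum_eq_single k
    (fun l _ hlk => by rw [eval_mul, eval_tPoly_inv_of_ne hk hlk, mul_zero])
    (fun h => absurd (mem_univ k) h), eval_mul, eval_C]

noncomputable def uPhase (s n : ℕ) (θ g : Fin s → ℂ) (q : ℂ) : ℂ[X] :=
  C q * uHat s n θ g + uTilde s θ g

variable {n : ℕ} {g : Fin s → ℂ} {q : ℂ}

lemma natDegree_uPhase_le : (uPhase s n θ g q).natDegree ≤ s - 1 := by
  have hsum : ∀ a : Fin s → ℂ, (∑ l, C (a l) * tPoly s θ l).natDegree ≤ s - 1 := fun a =>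
    natDegree_sum_le_of_forall_le _ _ fun l _ =>
      (natDegree_C_mul_le _ _).trans (natDegree_tPoly_le l)
  refine (natDegree_add_le _ _).trans (max_le ((natDegree_C_mul_le _ _).trans (hsum _)) ?_)
  rw [uTilde, natDegree_neg]
  exact hsum _

lemma eval_uPhase (z : ℂ) :
    (uPhase s n θ g q).eval z = q * (uHat s n θ g).eval z + (uTilde s θ g).eval z := by
  simp [uPhase]

lemma eval_uPoly_eq_eval_uPhase {z : ℂ} (hz : z ^ n = q) :
    (uPoly s n θ g).eval z = (uPhase s n θ g q).eval z := by
  simp [uPoly, eval_uPhase, hz]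

lemma eval_uPhase_inv {k : Fin s} (hk : θ k ≠ 0) :
    (uPhase s n θ g q).eval (θ k)⁻¹ = g k * (q * θ k ^ n - 1) * (tPoly s θ k).eval (θ k)⁻¹ := by
  simp only [uPhase, uHat, uTilde, eval_add, eval_neg, eval_mul, eval_C,
    eval_sum_C_mul_tPoly_inv _ hk]
  ring

lemma eval_uPhase_inv_ne_zero (hθ : Function.Injective θ) {k : Fin s} (hk : θ k ≠ 0)
    (hg : g k ≠ 0) (hθq : θ k ^ n ≠ q⁻¹) : (uPhase s n θ g q).eval (θ k)⁻¹ ≠ 0 := by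
  rw [eval_uPhase_inv hk]
  refine mul_ne_zero (mul_ne_zero hg fun h => hθq ?_) (eval_tPoly_inv_ne_zero hθ hk)
  rw [mul_comm, sub_eq_zero] at h
  exact eq_inv_of_mul_eq_one_left h

end Numerator

section Denominator

variable {s : ℕ} {θ : Fin s → ℂ}

lemma eval_vPoly (z : ℂ) : (vPoly s θ).eval z = ∏ l, (θ l * z - 1) := by
  simp [vPoly, eval_prod]

lemma natDegree_vPoly (hθ : ∀ l, θ l ≠ 0) : (vPoly s θ).natDegree = s := by
  have hfac : ∀ l, (C (θ l) * X - 1 : ℂ[X]).natDegree = 1 := fun l => by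
    rw [← C_1, natDegree_sub_C, natDegree_C_mul_X _ (hθ l)]
  rw [vPoly, natDegree_prod _ _ fun l _ => ne_zero_of_natDegree_gt (hfac l).symm.le]
  simp [hfac]

lemma isCoprime_vPoly (hθ : ∀ l, θ l ≠ 0) {P : ℂ[X]} (hP : ∀ l, P.eval (θ l)⁻¹ ≠ 0) :
    IsCoprime P (vPoly s θ) := by
  refine IsCoprime.prod_right fun l _ => IsCoprime.symm ?_
  have hdeg : (C (θ l) * X - 1 : ℂ[X]).degree = 1 := by
    rw [← C_1, degree_sub_C (by rw [degree_C_mul_X (hθ l)]; exact zero_lt_one),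
      degree_C_mul_X (hθ l)]
  refine (irreducible_of_degree_eq_one hdeg).coprime_iff_not_dvd.mpr fun hdvd => hP l ?_
  exact eval_eq_zero_of_dvd_of_eval_eq_zero hdvd (by simp [hθ l])

lemma eval_vPoly_ne_zero {n : ℕ} {q z : ℂ} (hz : z ^ n = q) (hθq : ∀ l, θ l ^ n ≠ q⁻¹) :
    (vPoly s θ).eval z ≠ 0 := by
  rw [eval_vPoly]
  refine prod_ne_zero_iff.mpr fun l _ h => hθq l ?_
  rw [← hz]
  exact eq_inv_of_mul_eq_one_left (by rw [← mul_pow, sub_eq_zero.mp h, one_pow])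

lemma pow_mul_conj_eval_vPoly (hθ : ∀ l, ‖θ l‖ = 1) {z : ℂ} (hz : ‖z‖ = 1) :
    z ^ s * conj ((vPoly s θ).eval z) = (∏ l, -conj (θ l)) * (vPoly s θ).eval z := by
  rw [eval_vPoly, map_prod, ← prod_mul_distrib, ← Fin.prod_const, ← prod_mul_distrib]
  refine prod_congr rfl fun l _ => ?_
  have hθθ : conj (θ l) * θ l = 1 := by rw [mul_comm, mul_conj_of_norm_eq_one (hθ l)]
  simp only [map_sub, map_mul, map_one]
  linear_combination conj (θ l) * mul_conj_of_norm_eq_one hz + z * hθθ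

-- `z^s·L̂⁺`, written through `v²` (see `pow_mul_conj_eval_vPoly`) so that its roots are explicit.
noncomputable def lHatPoly (s : ℕ) (θ : Fin s → ℂ) : ℂ[X] :=
  C (∏ l, -conj (θ l)) * vPoly s θ ^ 2

lemma eval_lHatPoly (hθ : ∀ l, ‖θ l‖ = 1) {z : ℂ} (hz : ‖z‖ = 1) :
    (lHatPoly s θ).eval z = z ^ s * ((vPoly s θ).eval z * conj ((vPoly s θ).eval z)) := by
  rw [lHatPoly, eval_mul, eval_C, eval_pow, mul_left_comm, pow_mul_conj_eval_vPoly hθ hz]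
  ring

lemma prod_neg_conj_ne_zero (hθ : ∀ l, θ l ≠ 0) : ∏ l, -conj (θ l) ≠ 0 :=
  prod_ne_zero_iff.mpr fun l _ => by simp [hθ l]

lemma lHatPoly_ne_zero (hθ : ∀ l, θ l ≠ 0) : lHatPoly s θ ≠ 0 := by
  have hv0 : (vPoly s θ).eval 0 ≠ 0 := by simp [eval_vPoly]
  have hv : vPoly s θ ≠ 0 := fun h => hv0 (by rw [h, eval_zero])
  exact mul_ne_zero (C_ne_zero.mpr (prod_neg_conj_ne_zero hθ)) (pow_ne_zero 2 hv)

lemma natDegree_lHatPoly (hθ : ∀ l, θ l ≠ 0) : (lHatPoly s θ).natDegree = 2 * s := by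
  rw [lHatPoly, natDegree_C_mul (prod_neg_conj_ne_zero hθ),
    natDegree_pow, natDegree_vPoly hθ, mul_comm]

lemma isCoprime_lHatPoly (hθ : ∀ l, θ l ≠ 0) {P : ℂ[X]} (hP : ∀ l, P.eval (θ l)⁻¹ ≠ 0) :
    IsCoprime P (lHatPoly s θ) :=
  (isCoprime_mul_unit_left_right (isUnit_C.mpr (prod_neg_conj_ne_zero hθ).isUnit) _ _).mpr
    (isCoprime_vPoly hθ hP).pow_right

end Denominator

lemma isCoprime_normSqPoly_uPhase_lHatPoly {s n : ℕ} {θ g : Fin s → ℂ} {q : ℂ}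
    (hθ : ∀ l, ‖θ l‖ = 1) (hθinj : Function.Injective θ) (hg : ∀ l, g l ≠ 0)
    (hθq : ∀ l, θ l ^ n ≠ q⁻¹) :
    IsCoprime (normSqPoly (s - 1) (uPhase s n θ g q)) (lHatPoly s θ) := by
  have hθ0 : ∀ l, θ l ≠ 0 := fun l => ne_zero_of_norm_eq_one (hθ l)
  refine isCoprime_lHatPoly hθ0 fun l => eval_normSqPoly_ne_zero natDegree_uPhase_le ?_
    (eval_uPhase_inv_ne_zero hθinj (hθ0 l) (hg l) (hθq l))
  rw [norm_inv, hθ l, inv_one]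

lemma normSq_div_mul_mul_conj {a b : ℂ} (hb : b ≠ 0) :
    (normSq (a / b) : ℂ) * (b * conj b) = a * conj a := by
  rw [Complex.mul_conj, Complex.mul_conj, normSq_div, ← ofReal_mul,
    div_mul_cancel₀ _ (normSq_pos.mpr hb).ne']

lemma add_mul_conj_add {q : ℂ} (hq : ‖q‖ = 1) (a b : ℂ) :
    (q * a + b) * conj (q * a + b) =
      (a * conj a + b * conj b) + q * (a * conj b) + conj q * conj (a * conj b) := by
  simp only [map_add, map_mul, conj_conj]
  linear_combination a * conj a * mul_conj_of_norm_eq_one hq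

lemma conj_eq_of_eq_mul_mul_conj {a c v : ℂ} (ha : conj a = a) (hv : v ≠ 0)
    (h : a = c * (v * conj v)) : conj c = c := by
  have hvv : v * conj v ≠ 0 := mul_ne_zero hv ((_root_.map_ne_zero _).mpr hv)
  rw [eq_div_of_mul_eq hvv h.symm, map_div₀, ha, map_mul, conj_conj, mul_comm (conj v)]

lemma eval_normSqPoly_mul_eq_of_sample {s n : ℕ} {θ g : Fin s → ℂ} {q z : ℂ}
    (hθ : ∀ l, ‖θ l‖ = 1) (hz : ‖z‖ = 1) (hzn : z ^ n = q) (hv : (vPoly s θ).eval z ≠ 0)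
    {lh m : ℤ → ℂ}
    (hsample : (normSq ((uPoly s n θ g).eval z / (vPoly s θ).eval z) : ℂ) * lEval s lh z
      = lEval (s - 1) m z) :
    (normSqPoly (s - 1) (uPhase s n θ g q)).eval z * (laurentPoly s lh).eval z =
      (lHatPoly s θ).eval z * (laurentPoly (s - 1) m).eval z := by
  have hz0 := ne_zero_of_norm_eq_one hz
  rw [eval_normSqPoly natDegree_uPhase_le hz, eval_laurentPoly _ _ hz0, eval_lHatPoly hθ hz,
    eval_laurentPoly _ _ hz0, ← hsample, ← eval_uPoly_eq_eval_uPhase hzn,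
    ← normSq_div_mul_mul_conj hv]
  ring

theorem phaseless_support_recovery_general (s n : ℕ) (hs : 1 ≤ s) (γ : ℝ)
    (gp θp : Fin s → ℂ)
    (hgp : ∀ l, gp l ≠ 0)
    (hθT : ∀ l, ‖θp l‖ = 1) (hθinj : Function.Injective θp)
    (hθn : ∀ k, θp k ^ n ≠ Complex.exp (-(γ : ℂ) * Complex.I))
    (z : Fin (4 * s - 1) → ℂ) (hzinj : Function.Injective z)
    (hzT : ∀ j, ‖z j‖ = 1)
    (hzn : ∀ j, z j ^ n = Complex.exp ((γ : ℂ) * Complex.I))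
    (y : Fin (4 * s - 1) → ℝ)
    (hy : ∀ j, y j = Complex.normSq
      ((uPoly s n θp gp).eval (z j) / (vPoly s θp).eval (z j)))
    (lh m : ℤ → ℂ)
    (hmsupp : ∀ k : ℤ, (k < -((s : ℤ) - 1) ∨ (s : ℤ) - 1 < k) → m k = 0)
    (hlhherm : ∀ k : ℤ, lh (-k) = (starRingEnd ℂ) (lh k))
    (heq : ∀ j, (y j : ℂ) * lEval s lh (z j) - lEval s m (z j) = 0) :
    ∃ c : ℝ, ∀ w : ℂ, ‖w‖ = 1 →
      lEval s lh w =
        (c : ℂ) * ((vPoly s θp).eval w * (starRingEnd ℂ) ((vPoly s θp).eval w)) ∧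
      lEval s m w =
        (c : ℂ) *
          (((uHat s n θp gp).eval w * (starRingEnd ℂ) ((uHat s n θp gp).eval w)
              + (uTilde s θp gp).eval w * (starRingEnd ℂ) ((uTilde s θp gp).eval w))
            + Complex.exp ((γ : ℂ) * Complex.I) *
                ((uHat s n θp gp).eval w * (starRingEnd ℂ) ((uTilde s θp gp).eval w))
            + Complex.exp (-(γ : ℂ) * Complex.I) *
                (starRingEnd ℂ)
                  ((uHat s n θp gp).eval w * (starRingEnd ℂ) ((uTilde s θp gp).eval w))) := by
  set q := Complex.exp ((γ : ℂ) * Complex.I)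
  have hq : ‖q‖ = 1 := Complex.norm_exp_ofReal_mul_I γ
  have hq' : Complex.exp (-(γ : ℂ) * Complex.I) = conj q := by
    rw [← Complex.exp_conj, map_mul, Complex.conj_ofReal, Complex.conj_I, neg_mul, mul_neg]
  have hθq : ∀ k, θp k ^ n ≠ q⁻¹ := by rwa [neg_mul, Complex.exp_neg] at hθn
  have hθ0 : ∀ l, θp l ≠ 0 := fun l => ne_zero_of_norm_eq_one (hθT l)
  have hm : ∀ w, lEval s m w = lEval (s - 1) m w :=
    lEval_eq_lEval_of_le (Nat.sub_le s 1) fun k hk => hmsupp k (by omega)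
  have hv : ∀ j, (vPoly s θp).eval (z j) ≠ 0 := fun j => eval_vPoly_ne_zero (hzn j) hθq
  have hN : (normSqPoly (s - 1) (uPhase s n θp gp q)).natDegree ≤ 2 * (s - 1) :=
    natDegree_normSqPoly_le natDegree_uPhase_le
  have hLdeg := natDegree_laurentPoly_le s lh
  have hMdeg := natDegree_laurentPoly_le (s - 1) m
  obtain ⟨c, hL, hM⟩ := exists_eq_C_mul_of_eval_eq hzinj
    (isCoprime_normSqPoly_uPhase_lHatPoly hθT hθinj hgp hθq) (lHatPoly_ne_zero hθ0)
    (natDegree_lHatPoly hθ0 ▸ hLdeg) (by rw [Fintype.card_fin]; omega)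
    (by rw [Fintype.card_fin, natDegree_lHatPoly hθ0]; omega)
    fun j => eval_normSqPoly_mul_eq_of_sample (m := m) hθT (hzT j) (hzn j) (hv j)
      (by rw [← hy, ← hm]; exact sub_eq_zero.mp (heq j))
  have hc : conj c = c := by
    let j₀ : Fin (4 * s - 1) := ⟨0, by omega⟩
    exact conj_eq_of_eq_mul_mul_conj (conj_lEval hlhherm (hzT j₀)) (hv j₀)
      (lEval_eq_of_laurentPoly_eq (fun _ => eval_lHatPoly hθT) hL (hzT j₀))
  refine ⟨c.re, fun w hw => ?_⟩
  rw [Complex.conj_eq_iff_re.mp hc, hm, hq', ← add_mul_conj_add hq, ← eval_uPhase]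
  exact ⟨lEval_eq_of_laurentPoly_eq (fun _ => eval_lHatPoly hθT) hL hw,
    lEval_eq_of_laurentPoly_eq (fun _ => eval_normSqPoly natDegree_uPhase_le) hM hw⟩

/-- Theorem `thm:dft_msrmt_support`: with `4s−1` pairwise distinct
shifted-harmonic samples on `𝕋`, any Hermitian Laurent polynomials `L̂` (degrees `−s..s`)
and `M` (degrees `−(s−1)..(s−1)`) satisfying `y_j·L̂(z_j) − M(z_j) = 0` must satisfy
`L̂ = c·L̂⁺` and `M = c·M⁺` identically for a real scalar `c`, where
`M⁺ = L⁺ + e^{iγ}·L̃⁺ + e^{−iγ}·(L̃⁺)*`. -/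
theorem phaseless_support_recovery (s n : ℕ) (hs : 1 ≤ s) (hn : 4 * s - 1 ≤ n) (γ : ℝ)
    (gp θp : Fin s → ℂ)
    (hgp : ∀ l, gp l ≠ 0)
    (hθT : ∀ l, ‖θp l‖ = 1) (hθinj : Function.Injective θp)
    (hθn : ∀ k, θp k ^ n ≠ Complex.exp (-(γ : ℂ) * Complex.I))
    (z : Fin (4 * s - 1) → ℂ) (hzinj : Function.Injective z)
    (hzT : ∀ j, ‖z j‖ = 1)
    (hzn : ∀ j, z j ^ n = Complex.exp ((γ : ℂ) * Complex.I))
    (y : Fin (4 * s - 1) → ℝ)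
    (hy : ∀ j, y j = Complex.normSq
      ((uPoly s n θp gp).eval (z j) / (vPoly s θp).eval (z j)))
    (lh m : ℤ → ℂ)
    (hlhsupp : ∀ k : ℤ, (k < -(s : ℤ) ∨ (s : ℤ) < k) → lh k = 0)
    (hmsupp : ∀ k : ℤ, (k < -((s : ℤ) - 1) ∨ (s : ℤ) - 1 < k) → m k = 0)
    (hlhherm : ∀ k : ℤ, lh (-k) = (starRingEnd ℂ) (lh k))
    (hmherm : ∀ k : ℤ, m (-k) = (starRingEnd ℂ) (m k))
    (heq : ∀ j, (y j : ℂ) * lEval s lh (z j) - lEval s m (z j) = 0) :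
    ∃ c : ℝ, ∀ w : ℂ, ‖w‖ = 1 →
      lEval s lh w =
        (c : ℂ) * ((vPoly s θp).eval w * (starRingEnd ℂ) ((vPoly s θp).eval w)) ∧
      lEval s m w =
        (c : ℂ) *
          (((uHat s n θp gp).eval w * (starRingEnd ℂ) ((uHat s n θp gp).eval w)
              + (uTilde s θp gp).eval w * (starRingEnd ℂ) ((uTilde s θp gp).eval w))
            + Complex.exp ((γ : ℂ) * Complex.I) *
                ((uHat s n θp gp).eval w * (starRingEnd ℂ) ((uTilde s θp gp).eval w))
            + Complex.exp (-(γ : ℂ) * Complex.I) *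
                (starRingEnd ℂ)
                  ((uHat s n θp gp).eval w * (starRingEnd ℂ) ((uTilde s θp gp).eval w))) :=
  phaseless_support_recovery_general s n hs γ gp θp hgp hθT hθinj hθn z hzinj hzT hzn y hy lh m
    hmsupp hlhherm heq
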